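/- arXiv:1906.00670 — 2 statements merged into one kernel-verified Lean document; each statement's English description precedes it below -/
import Mathlib

section
/- Let w : Fin K → ℝ_{>0}, ℓ̂ : Fin K → ℝ_{≥0}, η' > 0, and define q, q' as the normalized weights before and after the exponential update w'_a = w_a exp(−η' ℓ̂_a). Then for every a: q'_a − q_a ≥ −η' ℓ̂_a q_a. -/
theorem exp_weights_one_step_drift (K : ℕ) (w lhat : Fin K → ℝ) (η' : ℝ)
    (hw : ∀ a, 0 < w a) (hl : ∀ a, 0 ≤ lhat a) (hη : 0 < η') (a : Fin K) :
    (w a * Real.exp (-η' * lhat a)) / (∑ b, w b * Real.exp (-η' * lhat b)) -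
        w a / (∑ b, w b) ≥
      -η' * lhat a * (w a / ∑ b, w b) := by
  have hK : 0 < K := Fin.pos a
  have hS : 0 < ∑ b, w b :=
    Finset.sum_pos (fun b _ => hw b) (by simp [Finset.univ_nonempty_iff, Fin.pos_iff_nonempty.mp hK])
  have hS' : 0 < ∑ b, w b * Real.exp (-η' * lhat b) :=
    Finset.sum_pos (fun b _ => mul_pos (hw b) (Real.exp_pos _))
      (by simp [Finset.univ_nonempty_iff, Fin.pos_iff_nonempty.mp hK])
  have hle : (∑ b, w b * Real.exp (-η' * lhat b)) ≤ ∑ b, w b := by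
    apply Finset.sum_le_sum
    intro b _
    have : Real.exp (-η' * lhat b) ≤ 1 := by
      apply Real.exp_le_one_iff.mpr
      have := mul_nonneg hη.le (hl b)
      linarith
    nlinarith [hw b]
  have h1 : w a * Real.exp (-η' * lhat a) / (∑ b, w b * Real.exp (-η' * lhat b))
      ≥ w a * Real.exp (-η' * lhat a) / (∑ b, w b) := by
    apply div_le_div_of_nonneg_left _ hS' hle
    exact (mul_pos (hw a) (Real.exp_pos _)).le
  have h2 : Real.exp (-η' * lhat a) ≥ 1 + (-η' * lhat a) := by
    linarith [Real.add_one_le_exp (-η' * lhat a)]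
  have h3 : w a * Real.exp (-η' * lhat a) / (∑ b, w b) - w a / (∑ b, w b)
      ≥ -η' * lhat a * (w a / ∑ b, w b) := by
    rw [ge_iff_le, div_sub_div_same, ← mul_div_assoc, div_le_div_iff₀ hS hS]
    nlinarith [mul_pos (hw a) hS, h2, mul_le_mul_of_nonneg_right (by linarith [h2] : 1 + -η' * lhat a ≤ Real.exp (-η' * lhat a)) (mul_pos (hw a) hS).le]
  linarith
end

section
/- Let d : Fin T → ℕ. For each t, let N_t = |{s : t ≤ s + d(s) < t + d(t)}| (with s ranging over Fin T). Then ∑_{t} N_t ≤ ∑_t d(t). -/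
/-!
Write `f s = s + d s`. Exchanging the roles of `t` and `s`, the sum counts the pairs with
`t ≤ f s < f t`. For fixed `s`, the `t > s` of such pairs and the `t > s` with `f t ≤ f s`
all lie in the window `(s, f s]`, so together there are at most `d s` of them. The remaining
`t < s` with `f s < f t` are inversions of `f`; summed over `s` they are outnumbered by the
pairs `s < t` with `f t ≤ f s`, which the window bound already paid for.
-/

open Finset

theorem sum_card_inversions_le {ι α : Type*} [Fintype ι] [LT ι] [DecidableLT ι] [Preorder α]
    [DecidableLE α] [DecidableLT α] (f : ι → α) :
    ∑ s, #{t | t < s ∧ f s < f t} ≤ ∑ s, #{t | s < t ∧ f t ≤ f s} := by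
  calc ∑ s, #{t | t < s ∧ f s < f t}
      = ∑ t, #{s | t < s ∧ f s < f t} :=
        sum_card_bipartiteAbove_eq_sum_card_bipartiteBelow (fun s t => t < s ∧ f s < f t)
    _ ≤ ∑ s, #{t | s < t ∧ f t ≤ f s} :=
        sum_le_sum fun _ _ =>
          card_le_card <| monotone_filter_right _ fun _ _ => And.imp_right le_of_lt

theorem card_arrivals_add_card_overtaken_le_add_card_inversions {T : ℕ} (d : Fin T → ℕ)
    (s : Fin T) :
    #{t : Fin T | t ≤ s + d s ∧ s + d s < t + d t} + #{t | s < t ∧ t + d t ≤ s + d s} ≤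
      d s + #{t | t < s ∧ s + d s < t + d t} := by
  set arrivals : Finset (Fin T) := {t | t ≤ s + d s ∧ s + d s < t + d t}
  set overtaken : Finset (Fin T) := {t | s < t ∧ t + d t ≤ s + d s}
  set inversions : Finset (Fin T) := {t | t < s ∧ s + d s < t + d t}
  set window : Finset (Fin T) := (Ioc s.val (s + d s)).preimage Fin.val Fin.val_injective.injOn
  have hdisj : Disjoint arrivals overtaken := by
    simp only [arrivals, overtaken, disjoint_left, mem_filter, mem_univ, true_and]
    omega
  have hcover : arrivals ∪ overtaken ⊆ inversions ∪ window := by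
    intro t
    simp only [arrivals, overtaken, inversions, window, mem_union, mem_filter, mem_univ, true_and,
      mem_preimage, mem_Ioc]
    rcases lt_trichotomy t s with hts | rfl | hst <;> omega
  have hwindow : #window ≤ d s := by
    simpa using card_le_card_of_injOn Fin.val (t := Ioc s.val (s + d s))
      (fun t ht => by simpa [window] using ht) Fin.val_injective.injOn
  rw [← card_union_of_disjoint hdisj]
  have := (card_le_card hcover).trans (card_union_le _ _)
  omega

theorem stability_span_sum_le_total_delay (T : ℕ) (d : Fin T → ℕ) :
    (∑ t : Fin T, (Finset.univ.filter
        (fun s : Fin T => t.val ≤ s.val + d s ∧ s.val + d s < t.val + d t)).card) ≤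
      ∑ t : Fin T, d t := by
  have hswap : ∑ t : Fin T, #{s | t.val ≤ s + d s ∧ s + d s < t + d t} =
      ∑ s : Fin T, #{t | t.val ≤ s + d s ∧ s + d s < t + d t} :=
    sum_card_bipartiteAbove_eq_sum_card_bipartiteBelow _
  have hlocal := sum_le_sum fun s (_ : s ∈ univ) =>
    card_arrivals_add_card_overtaken_le_add_card_inversions d s
  have hinv := sum_card_inversions_le fun t : Fin T => t.val + d t
  simp only [sum_add_distrib] at hlocal
  omega
end
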